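/- The compress and expand operations are mutually inverse: given a tuple of traces (σ₁,...,σₙ) of a Kripke structure, a fair trajectory t, and a tuple of fair stuttering traces (σ₁*,...,σₙ*), we have ((σ₁,...,σₙ), t) = compress(σ₁*,...,σₙ*) if and only if (σ₁*,...,σₙ*) = expand((σ₁,...,σₙ), t). -/

import Mathlib

open Classical

variable {AP : Type*} {n : ℕ}

/-- Letters of the stuttering alphabet `Σ^st`: a letter over `AP` together with a flag
recording whether the fresh stuttering proposition `st` is present. -/
abbrev StLetter (AP : Type*) := Set AP × Bool

/-- Pointers induced by a trajectory: `p i 0 = 0` and `p i (k+1) = p i k + 1` if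
`i ∈ t k`, else `p i (k+1) = p i k`. -/
noncomputable def ptr (t : ℕ → Set (Fin n)) (i : Fin n) : ℕ → ℕ
  | 0 => 0
  | k + 1 => ptr t i k + (if i ∈ t k then 1 else 0)

/-- `expand((σ₁,...,σₙ), t)`: the tuple of stuttering traces induced by the traces `σ`
and the trajectory `t`; the `st` flag is set exactly at stuttering steps. -/
noncomputable def expand (σ : Fin n → ℕ → Set AP) (t : ℕ → Set (Fin n)) :
    Fin n → ℕ → StLetter AP := fun i k =>
  match k with
  | 0 => (σ i 0, false)
  | k + 1 => (σ i (ptr t i (k + 1)), decide (ptr t i (k + 1) = ptr t i k))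

/-- The trace part of `compress`: the `k`-th letter of `σᵢ` is the letter of `σᵢ*` at
the `k`-th non-stuttering position. -/
noncomputable def compressTrace (σstar : Fin n → ℕ → StLetter AP) :
    Fin n → ℕ → Set AP := fun i k =>
  (σstar i (Nat.nth (fun m => (σstar i m).2 = false) k)).1

/-- The trajectory part of `compress`: `i` moves at instant `k` iff position `k+1` of
`σᵢ*` is non-stuttering. -/
def compressTraj (σstar : Fin n → ℕ → StLetter AP) : ℕ → Set (Fin n) := fun k =>
  {i | (σstar i (k + 1)).2 = false}

/-- A trajectory is fair (and consists of nonempty sets). -/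
def FairTrajectory (t : ℕ → Set (Fin n)) : Prop :=
  (∀ k, (t k).Nonempty) ∧ ∀ i : Fin n, ∀ N, ∃ k, N ≤ k ∧ i ∈ t k

/-- A stuttering trace is fair: `st` is absent infinitely often. -/
def FairStTrace (τ : ℕ → StLetter AP) : Prop :=
  ∀ N, ∃ k, N ≤ k ∧ (τ k).2 = false

/-!
Along a trajectory `t`, the pointer `ptr t i m` counts the moves of `i` before instant `m`, so
`ptr t i m + 1` is the number of non-stuttering positions among `0, …, m` of the expanded trace.
Hence the `k`-th non-stuttering position of `expand σ t i` carries `σ i k`, which gives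
`compress ∘ expand = id` once every index moves infinitely often. Conversely, a stuttering trace
that starts non-stuttering and repeats its letter at every stuttering step is recovered by
expanding its compression, by induction along the positions.
-/

lemma ptr_succ (t : ℕ → Set (Fin n)) (i : Fin n) (k : ℕ) :
    ptr t i (k + 1) = ptr t i k + if i ∈ t k then 1 else 0 :=
  rfl

lemma expand_fst (σ : Fin n → ℕ → Set AP) (t : ℕ → Set (Fin n)) (i : Fin n) (m : ℕ) :
    (expand σ t i m).1 = σ i (ptr t i m) := by
  cases m <;> rfl

lemma expand_snd_zero (σ : Fin n → ℕ → Set AP) (t : ℕ → Set (Fin n)) (i : Fin n) :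
    (expand σ t i 0).2 = false :=
  rfl

lemma expand_snd_succ (σ : Fin n → ℕ → Set AP) (t : ℕ → Set (Fin n)) (i : Fin n) (k : ℕ) :
    (expand σ t i (k + 1)).2 = decide (i ∉ t k) := by
  by_cases h : i ∈ t k <;> simp [expand, ptr, h]

lemma count_succ_eq_ptr_add_one {t : ℕ → Set (Fin n)} {i : Fin n} {P : ℕ → Prop}
    [DecidablePred P] (hP0 : P 0) (hPs : ∀ k, P (k + 1) ↔ i ∈ t k) :
    ∀ m, Nat.count P (m + 1) = ptr t i m + 1
  | 0 => by simp [Nat.count_succ, hP0, ptr]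
  | m + 1 => by
    rw [Nat.count_succ, count_succ_eq_ptr_add_one hP0 hPs m, ptr_succ]
    by_cases h : i ∈ t m <;> simp [hPs, h]

lemma compressTraj_expand (σ : Fin n → ℕ → Set AP) (t : ℕ → Set (Fin n)) :
    compressTraj (expand σ t) = t := by
  ext k i
  simp [compressTraj, expand_snd_succ]

lemma compressTrace_expand (σ : Fin n → ℕ → Set AP) {t : ℕ → Set (Fin n)}
    (ht : ∀ i : Fin n, ∀ N, ∃ k, N ≤ k ∧ i ∈ t k) :
    compressTrace (expand σ t) = σ := by
  funext i k
  set P : ℕ → Prop := fun m => (expand σ t i m).2 = false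
  have hPs : ∀ m, P (m + 1) ↔ i ∈ t m := by simp [P, expand_snd_succ]
  have hinf : {m | P m}.Infinite := Set.infinite_of_forall_exists_gt fun a => by
    obtain ⟨k, hk, hik⟩ := ht i a
    exact ⟨k + 1, (hPs k).2 hik, by omega⟩
  have hptr : ptr t i (Nat.nth P k) = k := by
    have := count_succ_eq_ptr_add_one (expand_snd_zero σ t i) hPs (Nat.nth P k)
    rw [Nat.count_nth_succ_of_infinite hinf] at this
    omega
  change (expand σ t i (Nat.nth P k)).1 = σ i k
  rw [expand_fst, hptr]

lemma eq_expand_compress (σstar : Fin n → ℕ → StLetter AP)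
    (h0 : ∀ i, (σstar i 0).2 = false)
    (hrep : ∀ i k, (σstar i (k + 1)).2 = true → (σstar i (k + 1)).1 = (σstar i k).1) :
    σstar = expand (compressTrace σstar) (compressTraj σstar) := by
  funext i m
  set t := compressTraj σstar
  set P : ℕ → Prop := fun m => (σstar i m).2 = false
  have hPs : ∀ k, P (k + 1) ↔ i ∈ t k := fun _ => Iff.rfl
  have hfst : ∀ m, (σstar i m).1 = (σstar i (Nat.nth P (ptr t i m))).1 := by
    intro m
    induction m with
    | zero => rw [ptr, Nat.nth_zero_of_zero (h0 i)]
    | succ m ih =>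
      by_cases hm : P (m + 1)
      · have hcount := count_succ_eq_ptr_add_one (h0 i) hPs m
        have hptr : ptr t i (m + 1) = Nat.count P (m + 1) := by
          rw [ptr_succ, if_pos ((hPs m).1 hm)]
          omega
        rw [hptr, Nat.nth_count hm]
      · have hstut : (σstar i (m + 1)).2 = true := by simpa [P] using hm
        rw [hrep i m hstut, ih, ptr_succ, if_neg (mt (hPs m).2 hm), add_zero]
  refine Prod.ext (by rw [expand_fst]; exact hfst m) ?_
  cases m with
  | zero => exact h0 i
  | succ k => cases h : (σstar i (k + 1)).2 <;> simp [expand_snd_succ, t, compressTraj, h]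

theorem compress_eq_iff_expand_eq_general (σ : Fin n → ℕ → Set AP) (t : ℕ → Set (Fin n))
    (σstar : Fin n → ℕ → StLetter AP)
    (hft : FairTrajectory t)
    (h0 : ∀ i, (σstar i 0).2 = false)
    (hrep : ∀ i k, (σstar i (k + 1)).2 = true → (σstar i (k + 1)).1 = (σstar i k).1) :
    (compressTrace σstar = σ ∧ compressTraj σstar = t) ↔ σstar = expand σ t := by
  constructor
  · rintro ⟨rfl, rfl⟩
    exact eq_expand_compress σstar h0 hrep
  · rintro rfl
    exact ⟨compressTrace_expand σ hft.2, compressTraj_expand σ t⟩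

/-- `compress` and `expand` are mutually inverse: `((σ₁,...,σₙ), t) = compress(σ*)` iff
`σ* = expand((σ₁,...,σₙ), t)`.  The conventions fixed here (as in the paper's stuttering
construction) are that position `0` of each stuttering trace is non-stuttering and that
stuttering steps repeat the previous letter. -/
theorem compress_eq_iff_expand_eq (σ : Fin n → ℕ → Set AP) (t : ℕ → Set (Fin n))
    (σstar : Fin n → ℕ → StLetter AP)
    (hft : FairTrajectory t)
    (hfs : ∀ i, FairStTrace (σstar i))
    (h0 : ∀ i, (σstar i 0).2 = false)
    (hrep : ∀ i k, (σstar i (k + 1)).2 = true → (σstar i (k + 1)).1 = (σstar i k).1) :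
    (compressTrace σstar = σ ∧ compressTraj σstar = t) ↔ σstar = expand σ t :=
  compress_eq_iff_expand_eq_general σ t σstar hft h0 hrep
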